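/- Each hypergraph graded modal logic classifier is captured by an HR-MPNN: for every HGML formula φ(x) over a vocabulary of relation types R with arities and node colors C, there exist L ≥ 0, an HR-MPNN with L layers whose initial feature map assigns to each node the one-hot encoding of its color, and a designated coordinate p of the final feature vectors, such that for every relational hypergraph G = (V, E, R, c) with colors in C and every node v ∈ V, the p-th entry of h_v^(L) equals 1 if G ⊨ φ(v) and equals 0 otherwise. -/

import Mathlib

/-- A relational hypergraph over node set `V`, relation types `R` with arities `ar`.
A hyperedge (fact) `r(u₁,…,u_k)` is a pair of a relation type `r` and the tuple of
its nodes, of length `k = ar r`. -/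
structure RelHG (V R : Type) (ar : R → ℕ) where
  edges : Finset (Σ r : R, Fin (ar r) → V)

variable {V R D : Type} {ar : R → ℕ}

/-- `E(v)`: the set of edge–position pairs `(e, i)` with `e(i) = v`. -/
def RelHG.incid [DecidableEq V] (H : RelHG V R ar) (v : V) :
    Finset (Σ e : Σ r : R, Fin (ar r) → V, Fin (ar e.1)) :=
  (H.edges.sigma fun e => (Finset.univ : Finset (Fin (ar e.1)))).filter
    fun p => p.1.2 p.2 = v

/-- Colors used by the canonical (`τ = id`) hypergraph relational 1-WL test after `ℓ`
rounds, starting from colors in `D`. -/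
def WLC (D R : Type) : ℕ → Type :=
  fun ℓ => Nat.rec D (fun _ ih => ih × Multiset (Set (ih × ℕ) × R)) ℓ

/-- The hypergraph relational 1-WL test `hrwl₁`, with the canonical injective `τ`
(pairing), starting from the node coloring `c`. -/
def RelHG.hrwl [DecidableEq V] (H : RelHG V R ar) (c : V → D) :
    (ℓ : ℕ) → V → WLC D R ℓ
  | 0 => c
  | ℓ + 1 => fun v =>
      ⟨RelHG.hrwl H c ℓ v,
        (H.incid v).val.map fun ei =>
          ({p : WLC D R ℓ × ℕ |
              ∃ j : Fin (ar ei.1.1), j ≠ ei.2 ∧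
                p = (RelHG.hrwl H c ℓ (ei.1.2 j), (j : ℕ))},
            ei.1.1)⟩

/-- A hypergraph relational MPNN (HR-MPNN): layer dimensions `d`, message spaces `M`,
aggregation spaces `A`, and arbitrary relation-specific message, aggregation and
update functions for every layer. -/
structure HRMPNN (R : Type) where
  d : ℕ → ℕ
  M : ℕ → Type
  A : ℕ → Type
  msg : (ℓ : ℕ) → R → Set ((Fin (d ℓ) → ℝ) × ℕ) → M ℓ
  agg : (ℓ : ℕ) → (Fin (d ℓ) → ℝ) → Multiset (M ℓ) → A ℓ
  up : (ℓ : ℕ) → (Fin (d ℓ) → ℝ) → A ℓ → Fin (d (ℓ + 1)) → ℝ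

/-- The feature maps `h⁽ℓ⁾` computed by an HR-MPNN on a relational hypergraph `H`
from the initial feature map `x`. -/
def HRMPNN.h [DecidableEq V] (net : HRMPNN R) (H : RelHG V R ar)
    (x : V → Fin (net.d 0) → ℝ) : (ℓ : ℕ) → V → Fin (net.d ℓ) → ℝ
  | 0 => x
  | ℓ + 1 => fun v =>
      net.up ℓ (HRMPNN.h net H x ℓ v)
        (net.agg ℓ (HRMPNN.h net H x ℓ v)
          ((H.incid v).val.map fun ei =>
            net.msg ℓ ei.1.1
              {p : (Fin (net.d ℓ) → ℝ) × ℕ |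
                ∃ j : Fin (ar ei.1.1), j ≠ ei.2 ∧
                  p = (HRMPNN.h net H x ℓ (ei.1.2 j), (j : ℕ))}))

mutual
/-- Formulas of hypergraph graded modal logic (HGML) over relation types `R` with
arities `ar` and node colors `C`.  `count r i N hN Ψ` is the formula
`∃^{≥N} ỹ (r(y₁,…,y_{i-1},x,y_{i+1},…,y_{ar r}) ∧ Ψ(ỹ))` where `N ≥ 1`. -/
inductive HGML (R C : Type) (ar : R → ℕ) : Type where
  | color : C → HGML R C ar
  | fnot : HGML R C ar → HGML R C ar
  | fand : HGML R C ar → HGML R C ar → HGML R C ar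
  | count : (r : R) → (i : Fin (ar r)) → (N : ℕ) → 1 ≤ N →
      BComb R C ar (ar r) i → HGML R C ar

/-- Boolean combinations of HGML formulas whose free variables range over the
positions `j ≠ i` of a relation of arity `k` (the tuple `ỹ`). -/
inductive BComb (R C : Type) (ar : R → ℕ) : (k : ℕ) → Fin k → Type where
  | atom : {k : ℕ} → {i : Fin k} → (j : Fin k) → j ≠ i → HGML R C ar → BComb R C ar k i
  | bnot : {k : ℕ} → {i : Fin k} → BComb R C ar k i → BComb R C ar k i
  | band : {k : ℕ} → {i : Fin k} → BComb R C ar k i → BComb R C ar k i →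
      BComb R C ar k i
end

variable {C : Type}

mutual
/-- Satisfaction `G ⊨ φ(v)` of an HGML formula at a node of a relational
hypergraph `H` with node coloring `c`.  In the counting case we count full tuples
`w : Fin (ar r) → V` with `w i = v`, which are in bijection with the tuples `ỹ`. -/
def HGML.sat (H : RelHG V R ar) (c : V → C) : HGML R C ar → V → Prop
  | .color a, v => c v = a
  | .fnot φ, v => ¬ HGML.sat H c φ v
  | .fand φ ψ, v => HGML.sat H c φ v ∧ HGML.sat H c ψ v
  | .count r i N _ Ψ, v =>
      ∃ s : Finset (Fin (ar r) → V),
        N ≤ s.card ∧ ∀ w ∈ s, w i = v ∧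
          (⟨r, w⟩ : Σ r' : R, Fin (ar r') → V) ∈ H.edges ∧ BComb.sat H c Ψ w

/-- Satisfaction of a Boolean combination under an assignment `w` of the variables. -/
def BComb.sat (H : RelHG V R ar) (c : V → C) :
    {k : ℕ} → {i : Fin k} → BComb R C ar k i → (Fin k → V) → Prop
  | _, _, .atom j _ φ, w => HGML.sat H c φ (w j)
  | _, _, .bnot Ψ, w => ¬ BComb.sat H c Ψ w
  | _, _, .band Ψ₁ Ψ₂, w => BComb.sat H c Ψ₁ w ∧ BComb.sat H c Ψ₂ w
end


/-!
The network model-checks all subformulas of `φ` in parallel: from layer `1` on, coordinate `t`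
holds the truth value of the `t`-th subformula, correct at every layer at least its nesting
depth (color atoms have depth `0`). Since message, aggregation and update functions are
arbitrary, messages forward the neighbours' features tagged with their positions, and each
update evaluates every subformula one level deep from the previous layer: Boolean connectives
from the node's own feature, and `∃^{≥N}` by counting the incident hyperedges of the right
relation type, with the node at the right position, whose other nodes satisfy `Ψ`.
-/

namespace HGML

variable {R C : Type} {ar : R → ℕ}

mutual
def depth : HGML R C ar → ℕ
  | .color _ => 0
  | .fnot ψ => depth ψ + 1
  | .fand ψ χ => max (depth ψ) (depth χ) + 1
  | .count _ _ _ _ Ψ => BComb.depth Ψ + 1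

def _root_.BComb.depth : {k : ℕ} → {i : Fin k} → BComb R C ar k i → ℕ
  | _, _, .atom _ _ ψ => depth ψ
  | _, _, .bnot Ψ => BComb.depth Ψ
  | _, _, .band Ψ₁ Ψ₂ => max (BComb.depth Ψ₁) (BComb.depth Ψ₂)
end

def _root_.BComb.atoms : {k : ℕ} → {i : Fin k} → BComb R C ar k i → List (HGML R C ar)
  | _, _, .atom _ _ ψ => [ψ]
  | _, _, .bnot Ψ => Ψ.atoms
  | _, _, .band Ψ₁ Ψ₂ => Ψ₁.atoms ++ Ψ₂.atoms

/-- The formulas whose truth values at the previous layer determine the truth value of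
`σ`; a color atom is its own input. -/
def inputs : HGML R C ar → List (HGML R C ar)
  | .color a => [.color a]
  | .fnot ψ => [ψ]
  | .fand ψ χ => [ψ, χ]
  | .count _ _ _ _ Ψ => Ψ.atoms

mutual
def subformulas : HGML R C ar → List (HGML R C ar)
  | .color a => [.color a]
  | .fnot ψ => .fnot ψ :: subformulas ψ
  | .fand ψ χ => .fand ψ χ :: (subformulas ψ ++ subformulas χ)
  | .count r i N h Ψ => .count r i N h Ψ :: BComb.subformulas Ψ

def _root_.BComb.subformulas :
    {k : ℕ} → {i : Fin k} → BComb R C ar k i → List (HGML R C ar)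
  | _, _, .atom _ _ ψ => subformulas ψ
  | _, _, .bnot Ψ => BComb.subformulas Ψ
  | _, _, .band Ψ₁ Ψ₂ => BComb.subformulas Ψ₁ ++ BComb.subformulas Ψ₂
end

theorem eq_color_of_depth_eq_zero {σ : HGML R C ar} (h : σ.depth = 0) :
    ∃ a, σ = .color a := by
  cases σ with
  | color a => exact ⟨a, rfl⟩
  | _ => simp [depth] at h

theorem _root_.BComb.depth_le_of_mem_atoms : ∀ {k : ℕ} {i : Fin k} (Ψ : BComb R C ar k i),
    ∀ ψ ∈ Ψ.atoms, ψ.depth ≤ Ψ.depth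
  | _, _, .atom _ _ ψ => by simp [BComb.atoms, BComb.depth]
  | _, _, .bnot Ψ => Ψ.depth_le_of_mem_atoms
  | _, _, .band Ψ₁ Ψ₂ => by
      simp only [BComb.atoms, BComb.depth, List.mem_append, le_max_iff]
      rintro ψ (h | h)
      · exact .inl (Ψ₁.depth_le_of_mem_atoms ψ h)
      · exact .inr (Ψ₂.depth_le_of_mem_atoms ψ h)

theorem depth_le_of_mem_inputs {σ τ : HGML R C ar} {ℓ : ℕ} (hτ : τ ∈ σ.inputs)
    (hσ : σ.depth ≤ ℓ + 1) : τ.depth ≤ ℓ := by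
  cases σ with
  | color | fnot => simp_all [inputs, depth]
  | fand ψ χ =>
      simp only [inputs, depth, List.mem_cons, List.not_mem_nil, or_false] at hτ hσ
      rcases hτ with rfl | rfl <;> omega
  | count _ _ _ _ Ψ =>
      have := Ψ.depth_le_of_mem_atoms τ hτ
      simp only [depth] at hσ
      omega

theorem mem_subformulas_self (σ : HGML R C ar) : σ ∈ σ.subformulas := by
  cases σ <;> simp [subformulas]

theorem _root_.BComb.atoms_subset_subformulas :
    ∀ {k : ℕ} {i : Fin k} (Ψ : BComb R C ar k i), Ψ.atoms ⊆ Ψ.subformulas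
  | _, _, .atom _ _ ψ => by simpa [BComb.atoms, BComb.subformulas] using mem_subformulas_self ψ
  | _, _, .bnot Ψ => Ψ.atoms_subset_subformulas
  | _, _, .band Ψ₁ Ψ₂ =>
      List.append_subset.2 ⟨List.subset_append_of_subset_left _ Ψ₁.atoms_subset_subformulas,
        List.subset_append_of_subset_right _ Ψ₂.atoms_subset_subformulas⟩

theorem inputs_subset_subformulas (σ : HGML R C ar) : σ.inputs ⊆ σ.subformulas := by
  cases σ with
  | count _ _ _ _ Ψ => exact fun τ h => .tail _ (Ψ.atoms_subset_subformulas h)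
  | _ => simp [inputs, subformulas, List.subset_def, mem_subformulas_self]

mutual
theorem subformulas_subset_of_mem :
    ∀ (φ : HGML R C ar), ∀ σ ∈ φ.subformulas, σ.subformulas ⊆ φ.subformulas
  | .color _ => by simp [subformulas]
  | .fnot ψ => by
      simp only [subformulas, List.mem_cons]
      rintro σ (rfl | h)
      · exact fun _ => id
      · exact List.Subset.trans (subformulas_subset_of_mem ψ σ h) (List.subset_cons_self _ _)
  | .fand ψ χ => by
      simp only [subformulas, List.mem_cons, List.mem_append]
      rintro σ (rfl | h | h)
      · exact fun _ => id
      · exact List.Subset.trans (subformulas_subset_of_mem ψ σ h)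
          (List.subset_cons_of_subset _ (List.subset_append_left _ _))
      · exact List.Subset.trans (subformulas_subset_of_mem χ σ h)
          (List.subset_cons_of_subset _ (List.subset_append_right _ _))
  | .count _ _ _ _ Ψ => by
      simp only [subformulas, List.mem_cons]
      rintro σ (rfl | h)
      · exact fun _ => id
      · exact List.Subset.trans (Ψ.subformulas_subset_of_mem σ h) (List.subset_cons_self _ _)

theorem _root_.BComb.subformulas_subset_of_mem : ∀ {k : ℕ} {i : Fin k} (Ψ : BComb R C ar k i),
    ∀ σ ∈ Ψ.subformulas, σ.subformulas ⊆ Ψ.subformulas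
  | _, _, .atom _ _ ψ => subformulas_subset_of_mem ψ
  | _, _, .bnot Ψ => Ψ.subformulas_subset_of_mem
  | _, _, .band Ψ₁ Ψ₂ => by
      simp only [BComb.subformulas, List.mem_append]
      rintro σ (h | h)
      · exact List.Subset.trans (Ψ₁.subformulas_subset_of_mem σ h) (List.subset_append_left _ _)
      · exact List.Subset.trans (Ψ₂.subformulas_subset_of_mem σ h) (List.subset_append_right _ _)
end

theorem inputs_subset_of_mem_subformulas {φ σ : HGML R C ar} (h : σ ∈ φ.subformulas) :
    σ.inputs ⊆ φ.subformulas :=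
  List.Subset.trans (inputs_subset_subformulas σ) (subformulas_subset_of_mem φ σ h)

end HGML

section LocalEvaluation

variable {V R C X : Type} {ar : R → ℕ}

open Finset

def nbhdFeatures {k : ℕ} (F : V → X) (w : Fin k → V) (i : Fin k) : Set (X × ℕ) :=
  {p | ∃ j, j ≠ i ∧ p = (F (w j), (j : ℕ))}

def RelHG.inbox [DecidableEq V] (H : RelHG V R ar) (F : V → X) (v : V) :
    Multiset (Set (X × ℕ) × R) :=
  (H.incid v).val.map fun ei => (nbhdFeatures F ei.1.2 ei.2, ei.1.1)

/-- The anchor position of a hyperedge is recovered from its message as the only missing one. -/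
theorem forall_not_mem_nbhdFeatures_iff {k : ℕ} (F : V → X) (w : Fin k → V) (pos i : Fin k) :
    (∀ x, (x, (i : ℕ)) ∉ nbhdFeatures F w pos) ↔ pos = i := by
  constructor
  · intro h
    by_contra hne
    exact h _ ⟨i, Ne.symm hne, rfl⟩
  · rintro rfl x ⟨j, hj, heq⟩
    exact hj (Fin.ext (congrArg Prod.snd heq).symm)

def BComb.evalMsg (read : X → HGML R C ar → Prop) :
    {k : ℕ} → {i : Fin k} → BComb R C ar k i → Set (X × ℕ) → Prop
  | _, _, .atom j _ ψ, S => ∃ x, (x, (j : ℕ)) ∈ S ∧ read x ψ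
  | _, _, .bnot Ψ, S => ¬ BComb.evalMsg read Ψ S
  | _, _, .band Ψ₁ Ψ₂, S => BComb.evalMsg read Ψ₁ S ∧ BComb.evalMsg read Ψ₂ S

theorem BComb.evalMsg_nbhdFeatures_iff (H : RelHG V R ar) (c : V → C)
    (read : X → HGML R C ar → Prop) (F : V → X) :
    ∀ {k : ℕ} {i : Fin k} (Ψ : BComb R C ar k i),
      (∀ ψ ∈ Ψ.atoms, ∀ u, read (F u) ψ ↔ ψ.sat H c u) →
      ∀ w : Fin k → V, (Ψ.evalMsg read (nbhdFeatures F w i) ↔ Ψ.sat H c w)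
  | _, _, .atom j hj ψ, hread, w => by
      have hψ := hread ψ (List.mem_singleton_self ψ) (w j)
      simp only [evalMsg, BComb.sat, nbhdFeatures]
      constructor
      · rintro ⟨x, ⟨j', -, heq⟩, hx⟩
        obtain rfl : j = j' := Fin.ext (congrArg Prod.snd heq)
        obtain rfl : x = F (w j) := congrArg Prod.fst heq
        exact hψ.mp hx
      · exact fun h => ⟨F (w j), ⟨j, hj, rfl⟩, hψ.mpr h⟩
  | _, _, .bnot Ψ, hread, w => not_congr (Ψ.evalMsg_nbhdFeatures_iff H c read F hread w)
  | _, _, .band Ψ₁ Ψ₂, hread, w =>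
      and_congr
        (Ψ₁.evalMsg_nbhdFeatures_iff H c read F
          (fun ψ h => hread ψ (List.mem_append_left _ h)) w)
        (Ψ₂.evalMsg_nbhdFeatures_iff H c read F
          (fun ψ h => hread ψ (List.mem_append_right _ h)) w)

open scoped Classical in
/-- The truth value of `σ` at a node with feature `hv` and incoming messages `ms`, where `read`
decodes truth values of formulas from features. -/
def HGML.evalLocal (read : X → HGML R C ar → Prop) (σ : HGML R C ar) (hv : X)
    (ms : Multiset (Set (X × ℕ) × R)) : Prop :=
  match σ with
  | .color a => read hv (.color a)
  | .fnot ψ => ¬ read hv ψ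
  | .fand ψ χ => read hv ψ ∧ read hv χ
  | .count r i N _ Ψ =>
      N ≤ ms.countP fun m => m.2 = r ∧ (∀ x, (x, (i : ℕ)) ∉ m.1) ∧ Ψ.evalMsg read m.1

open scoped Classical in
theorem RelHG.countP_inbox_eq_card [Fintype V] [DecidableEq V] (H : RelHG V R ar)
    (F : V → X) (v : V) (r : R) (i : Fin (ar r)) (P : Set (X × ℕ) → Prop) :
    (H.inbox F v).countP (fun m => m.2 = r ∧ (∀ x, (x, (i : ℕ)) ∉ m.1) ∧ P m.1) =
      #{w : Fin (ar r) → V | w i = v ∧ ⟨r, w⟩ ∈ H.edges ∧ P (nbhdFeatures F w i)} := by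
  rw [RelHG.inbox, Multiset.countP_map, ← filter_val, card_val]
  symm
  refine card_bij (fun w _ => ⟨⟨r, w⟩, i⟩) ?_ ?_ ?_
  · intro w hw
    obtain ⟨hwi, hedge, hP⟩ := (mem_filter.mp hw).2
    simp only [mem_filter, RelHG.incid, mem_sigma, mem_univ, and_true]
    exact ⟨⟨hedge, hwi⟩, trivial, (forall_not_mem_nbhdFeatures_iff F w i i).mpr rfl, hP⟩
  · intro w _ w' _ h
    simp only [Sigma.mk.injEq, heq_eq_eq, and_true, true_and] at h
    exact h
  · rintro ⟨⟨r', w⟩, pos⟩ h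
    simp only [mem_filter, RelHG.incid, mem_sigma, mem_univ, and_true] at h
    obtain ⟨⟨hedge, hwv⟩, rfl, hpos, hP⟩ := h
    obtain rfl := (forall_not_mem_nbhdFeatures_iff F w pos i).mp hpos
    exact ⟨w, mem_filter.mpr ⟨mem_univ _, hwv, hedge, hP⟩, rfl⟩

open scoped Classical in
theorem HGML.sat_count_iff [Fintype V] (H : RelHG V R ar) (c : V → C) (r : R)
    (i : Fin (ar r)) (N : ℕ) (hN : 1 ≤ N) (Ψ : BComb R C ar (ar r) i) (v : V) :
    (HGML.count r i N hN Ψ).sat H c v ↔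
      N ≤ #{w : Fin (ar r) → V | w i = v ∧ ⟨r, w⟩ ∈ H.edges ∧ Ψ.sat H c w} := by
  simp only [HGML.sat]
  constructor
  · rintro ⟨s, hsN, hs⟩
    exact hsN.trans (card_le_card fun w hw => mem_filter.mpr ⟨mem_univ _, hs w hw⟩)
  · exact fun h => ⟨_, h, fun w hw => (mem_filter.mp hw).2⟩

theorem HGML.evalLocal_inbox_iff [Fintype V] [DecidableEq V] (H : RelHG V R ar) (c : V → C)
    (read : X → HGML R C ar → Prop) (F : V → X) (σ : HGML R C ar)
    (hread : ∀ τ ∈ σ.inputs, ∀ u, read (F u) τ ↔ τ.sat H c u) (v : V) :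
    σ.evalLocal read (F v) (H.inbox F v) ↔ σ.sat H c v := by
  cases σ with
  | color a => exact hread _ (List.mem_singleton_self _) v
  | fnot ψ => exact not_congr (hread ψ (List.mem_singleton_self _) v)
  | fand ψ χ => exact and_congr (hread ψ (by simp [inputs]) v) (hread χ (by simp [inputs]) v)
  | count r i N hN Ψ =>
      classical
      rw [HGML.sat_count_iff, evalLocal, RelHG.countP_inbox_eq_card]
      simp only [Ψ.evalMsg_nbhdFeatures_iff H c read F hread]
      congr!

end LocalEvaluation

section ModelCheckerNet

variable {R C : Type} {ar : R → ℕ}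

def layerDims (d₀ n : ℕ) : ℕ → ℕ
  | 0 => d₀
  | _ + 1 => n

/-- How the features of layer `ℓ` of `modelCheckerNet` encode truth values: a one-hot color at
layer `0`, afterwards one indicator coordinate per formula of `ls`. -/
def modelCheckerRead (ls : List (HGML R C ar)) {d₀ : ℕ} (colIdx : C → Fin d₀) :
    (ℓ : ℕ) → (Fin (layerDims d₀ ls.length ℓ) → ℝ) → HGML R C ar → Prop
  | 0 => fun x ψ => ∃ a, ψ = .color a ∧ x (colIdx a) = 1
  | _ + 1 => fun x ψ => ∃ t, ls.get t = ψ ∧ x t = 1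

open scoped Classical in
noncomputable def modelCheckerNet (ls : List (HGML R C ar)) {d₀ : ℕ} (colIdx : C → Fin d₀) :
    HRMPNN R where
  d := layerDims d₀ ls.length
  M ℓ := Set ((Fin (layerDims d₀ ls.length ℓ) → ℝ) × ℕ) × R
  A ℓ := (Fin (layerDims d₀ ls.length ℓ) → ℝ) ×
    Multiset (Set ((Fin (layerDims d₀ ls.length ℓ) → ℝ) × ℕ) × R)
  msg _ r S := (S, r)
  agg _ hv ms := (hv, ms)
  up ℓ _ a t := if (ls.get t).evalLocal (modelCheckerRead ls colIdx ℓ) a.1 a.2 then 1 else 0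

variable {V : Type} [DecidableEq V] (ls : List (HGML R C ar)) {d₀ : ℕ} (colIdx : C → Fin d₀)
  (H : RelHG V R ar) (x : V → Fin d₀ → ℝ)

open scoped Classical in
theorem modelCheckerNet_h_succ (ℓ : ℕ) (v : V) :
    (modelCheckerNet ls colIdx).h H x (ℓ + 1) v = fun t =>
      if (ls.get t).evalLocal (modelCheckerRead ls colIdx ℓ)
          ((modelCheckerNet ls colIdx).h H x ℓ v)
          (H.inbox ((modelCheckerNet ls colIdx).h H x ℓ) v)
      then 1 else 0 :=
  rfl

theorem modelCheckerRead_succ_ite_iff (P : HGML R C ar → Prop) [DecidablePred P]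
    {ψ : HGML R C ar} (hψ : ψ ∈ ls) (ℓ : ℕ) :
    modelCheckerRead ls colIdx (ℓ + 1) (fun t => if P (ls.get t) then 1 else 0) ψ ↔ P ψ := by
  obtain ⟨t, rfl⟩ := List.mem_iff_get.mp hψ
  simp only [modelCheckerRead]
  constructor
  · rintro ⟨s, hs, h⟩
    rw [← hs]
    by_contra hP
    rw [if_neg hP] at h
    exact zero_ne_one h
  · intro h
    exact ⟨t, rfl, if_pos h⟩

variable {ls} [Fintype V] (hcl : ∀ σ ∈ ls, σ.inputs ⊆ ls) (c : V → C)
include hcl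

theorem evalLocal_modelCheckerRead_iff {ℓ : ℕ}
    (hread : ∀ ψ ∈ ls, ψ.depth ≤ ℓ → ∀ u,
      modelCheckerRead ls colIdx ℓ ((modelCheckerNet ls colIdx).h H x ℓ u) ψ ↔ ψ.sat H c u)
    {σ : HGML R C ar} (hσ : σ ∈ ls) (hdepth : σ.depth ≤ ℓ + 1) (v : V) :
    σ.evalLocal (modelCheckerRead ls colIdx ℓ) ((modelCheckerNet ls colIdx).h H x ℓ v)
        (H.inbox ((modelCheckerNet ls colIdx).h H x ℓ) v) ↔ σ.sat H c v :=
  HGML.evalLocal_inbox_iff H c _ _ σ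
    (fun τ hτ => hread τ (hcl σ hσ hτ) (HGML.depth_le_of_mem_inputs hτ hdepth)) v

theorem modelCheckerRead_iff (hx : ∀ u a, x u (colIdx a) = 1 ↔ c u = a) (ℓ : ℕ) :
    ∀ ψ ∈ ls, ψ.depth ≤ ℓ → ∀ u,
      modelCheckerRead ls colIdx ℓ ((modelCheckerNet ls colIdx).h H x ℓ u) ψ ↔ ψ.sat H c u := by
  induction ℓ with
  | zero =>
      intro ψ _ hψ u
      obtain ⟨a, rfl⟩ := HGML.eq_color_of_depth_eq_zero (Nat.le_zero.mp hψ)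
      simp only [modelCheckerRead, HGML.color.injEq, exists_eq_left', HGML.sat]
      exact hx u a
  | succ ℓ ih =>
      intro ψ hψ hdepth u
      classical
      let F := (modelCheckerNet ls colIdx).h H x ℓ
      exact (modelCheckerRead_succ_ite_iff ls colIdx
        (fun σ => σ.evalLocal (modelCheckerRead ls colIdx ℓ) (F u) (H.inbox F u)) hψ ℓ).trans
        (evalLocal_modelCheckerRead_iff colIdx H x hcl c ih hψ hdepth u)

open scoped Classical in
theorem modelCheckerNet_h_succ_apply (hx : ∀ u a, x u (colIdx a) = 1 ↔ c u = a)
    (v : V) (t : Fin ls.length) (ℓ : ℕ) (ht : (ls.get t).depth ≤ ℓ + 1) :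
    (modelCheckerNet ls colIdx).h H x (ℓ + 1) v t = if (ls.get t).sat H c v then 1 else 0 := by
  rw [modelCheckerNet_h_succ]
  exact if_congr (evalLocal_modelCheckerRead_iff colIdx H x hcl c
    (modelCheckerRead_iff colIdx H x hcl c hx ℓ) (List.get_mem ls t) ht v) rfl rfl

end ModelCheckerNet

/-- Each HGML classifier is captured by an HR-MPNN: for every HGML
formula `φ(x)` there are `L ≥ 0`, an HR-MPNN with `L` layers whose initial feature map
assigns to each node the one-hot encoding of its color, and a coordinate `p` of the
final feature vectors, such that on every relational hypergraph the `p`-th entry of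
`h_v⁽ᴸ⁾` is `1` if `G ⊨ φ(v)` and `0` otherwise. -/
theorem hgml_captured_by_HRMPNN
    {R C : Type} [Fintype R] [DecidableEq R] [Fintype C] [DecidableEq C]
    {ar : R → ℕ} (har : ∀ r : R, 1 ≤ ar r) (φ : HGML R C ar) :
    ∃ (L : ℕ) (net : HRMPNN R),
      net.d 0 = Fintype.card C ∧
      ∃ p : Fin (net.d L),
        ∀ (V : Type) [Fintype V] [DecidableEq V]
          (H : RelHG V R ar) (c : V → C) (v : V),
          (HGML.sat H c φ v →
            net.h H (fun u i => if ((Fintype.equivFin C) (c u) : ℕ) = (i : ℕ) then 1 else 0)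
              L v p = 1) ∧
          (¬ HGML.sat H c φ v →
            net.h H (fun u i => if ((Fintype.equivFin C) (c u) : ℕ) = (i : ℕ) then 1 else 0)
              L v p = 0) := by
  obtain ⟨p, hp⟩ := List.mem_iff_get.mp (HGML.mem_subformulas_self φ)
  refine ⟨φ.depth + 1, modelCheckerNet φ.subformulas (Fintype.equivFin C), rfl, p,
    fun V _ _ H c v => ?_⟩
  have hx : ∀ u a, (if ((Fintype.equivFin C) (c u) : ℕ) = (Fintype.equivFin C a : ℕ)
      then (1 : ℝ) else 0) = 1 ↔ c u = a := by
    simp [Fin.val_inj]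
  have hval := modelCheckerNet_h_succ_apply (Fintype.equivFin C) H
    (fun u i => if ((Fintype.equivFin C) (c u) : ℕ) = (i : ℕ) then 1 else 0)
    (fun σ => HGML.inputs_subset_of_mem_subformulas) c hx v p φ.depth
    (by rw [hp]; exact Nat.le_succ _)
  rw [hp] at hval
  exact ⟨fun h => hval.trans (if_pos h), fun h => hval.trans (if_neg h)⟩
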